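/- Let K be a field of characteristic 0, r ≥ 1, and p_0,…,p_r ∈ K[X] with p_0 ≠ 0 and p_r ≠ 0; let L* be the operator on K(X) given by L*(u)(X) = ∑_{i=0}^r p_i(X) u(X−i). Let Q ∈ K[X] be nonconstant, squarefree, shift-free, and refined with respect to both p_0 and p_r. Then every u ∈ K_Q(X) can be written u = w + P + L*(T) where T ∈ K_Q(X), P ∈ K[X], and w lies in the K-linear span of the fractions X^ℓ / Q(X−j)^s with 0 ≤ j ≤ r−1, s ≥ 1 and 0 ≤ ℓ < s·deg Q (i.e., the weakly reduced form has all its poles at zeros of Q(X−j) for some j ∈ {0,…,r−1}). -/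

import Mathlib

open Polynomial

/-- For a nonconstant polynomial `Q ∈ K[X]`, `KQspan K Q` is the `K`-linear span in `K(X)`
of the fractions `X^ℓ / Q(X+h)^j` with `h ∈ ℤ`, `j ≥ 1` and `0 ≤ ℓ < j·deg Q`. -/
noncomputable def KQspan (K : Type*) [Field K] (Q : Polynomial K) :
    Submodule K (RatFunc K) :=
  Submodule.span K { f : RatFunc K | ∃ (h : ℤ) (j ℓ : ℕ), 1 ≤ j ∧ ℓ < j * Q.natDegree ∧
    f = algebraMap (Polynomial K) (RatFunc K) (X ^ ℓ) /
        algebraMap (Polynomial K) (RatFunc K) ((Q.comp (X + C (h : K))) ^ j) }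

/-- `Q` is refined with respect to `P` when for every `h ∈ ℤ`, there is `ℓ ∈ ℕ` with
`gcd(P, Q(X+h)^{ℓ+1}) = Q(X+h)^ℓ`, i.e. `P = Q(X+h)^ℓ · S` with `S` coprime to `Q(X+h)`. -/
def RefinedWrt {K : Type*} [Field K] (Q P : Polynomial K) : Prop :=
  ∀ h : ℤ, ∃ (ℓ : ℕ) (S : Polynomial K),
    P = (Q.comp (X + C (h : K))) ^ ℓ * S ∧ IsCoprime S (Q.comp (X + C (h : K)))

namespace WRP
variable {K : Type*} [Field K]


lemma algMap_eq_aeval (A : K[X]) :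
    algebraMap K[X] (RatFunc K) A = Polynomial.aeval RatFunc.X A := by
  have : (IsScalarTower.toAlgHom K K[X] (RatFunc K)) = Polynomial.aeval RatFunc.X := by
    apply Polynomial.algHom_ext
    simp [RatFunc.algebraMap_X]
  exact congrFun (congrArg DFunLike.coe this) A

lemma sigma_zpow_X (σ : RatFunc K ≃ₐ[K] RatFunc K) (hσ : σ RatFunc.X = RatFunc.X + 1)
    (k : ℤ) : (σ ^ k) RatFunc.X = RatFunc.X + (k : RatFunc K) := by
  have hinv : (σ⁻¹ : RatFunc K ≃ₐ[K] RatFunc K) RatFunc.X = RatFunc.X - 1 := by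
    have h0 : (σ⁻¹ : RatFunc K ≃ₐ[K] RatFunc K) (σ RatFunc.X) = RatFunc.X := σ.symm_apply_apply _
    rw [hσ, map_add, map_one] at h0
    linear_combination h0
  induction k using Int.induction_on with
  | zero => simp
  | succ n ih =>
      have h : (σ ^ ((n : ℤ) + 1)) = σ ^ (n : ℤ) * σ := by rw [zpow_add, zpow_one]
      rw [h, AlgEquiv.mul_apply, hσ, map_add, map_one, ih]
      push_cast; ring
  | pred n ih =>
      have h : (σ ^ (-(n : ℤ) - 1)) = σ ^ (-(n : ℤ)) * σ⁻¹ := by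
        rw [sub_eq_add_neg, zpow_add, zpow_neg_one]
      rw [h, AlgEquiv.mul_apply, hinv, map_sub, map_one, ih]
      push_cast; ring

lemma sigma_zpow_algebraMap (σ : RatFunc K ≃ₐ[K] RatFunc K)
    (hσ : σ RatFunc.X = RatFunc.X + 1) (k : ℤ) (A : K[X]) :
    (σ ^ k) (algebraMap K[X] (RatFunc K) A)
      = algebraMap K[X] (RatFunc K) (A.comp (X + C (k : K))) := by
  rw [algMap_eq_aeval, algMap_eq_aeval, Polynomial.aeval_comp,
    ← Polynomial.aeval_algHom_apply (σ ^ k : RatFunc K ≃ₐ[K] RatFunc K) RatFunc.X A,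
    sigma_zpow_X σ hσ]
  congr 1
  rw [map_add, Polynomial.aeval_X, Polynomial.aeval_C]
  congr 1
  push_cast
  simp


lemma comp_X_add_C_comp (A : K[X]) (a b : K) :
    (A.comp (X + C a)).comp (X + C b) = A.comp (X + C (a + b)) := by
  rw [comp_assoc]
  congr 1
  rw [add_comp, X_comp, C_comp, add_assoc, ← C_add, add_comm b a]

noncomputable def Qh (Q : K[X]) (h : ℤ) : K[X] := Q.comp (X + C (h : K))

lemma Qh_natDegree (Q : K[X]) (h : ℤ) : (Qh Q h).natDegree = Q.natDegree := by
  rw [Qh, natDegree_comp, natDegree_X_add_C, mul_one]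

lemma Qh_ne_zero {Q : K[X]} (hQ : 0 < Q.natDegree) (h : ℤ) : Qh Q h ≠ 0 := by
  intro h0
  have := Qh_natDegree Q h
  rw [h0, natDegree_zero] at this
  omega

lemma Qh_comp (Q : K[X]) (h : ℤ) (k : ℤ) :
    (Qh Q h).comp (X + C (k : K)) = Qh Q (h + k) := by
  rw [Qh, Qh, comp_X_add_C_comp]
  push_cast
  ring_nf

lemma key_B {Q : K[X]} (hQ : 0 < Q.natDegree) (h : ℤ) (j ℓ : ℕ) (hj : 1 ≤ j)
    {S : K[X]} (hcop : IsCoprime S (Qh Q h)) :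
    ∃ B E : K[X], B.natDegree < j * Q.natDegree ∧
      (X : K[X]) ^ ℓ = S * B + (Qh Q h) ^ j * E := by
  have hqne := Qh_ne_zero hQ h
  obtain ⟨a, b, hab⟩ := (hcop.pow_right : IsCoprime S ((Qh Q h) ^ j))
  have hqjne : (Qh Q h) ^ j ≠ 0 := pow_ne_zero _ hqne
  have hlc : ((Qh Q h) ^ j).leadingCoeff ≠ 0 := leadingCoeff_ne_zero.mpr hqjne
  have hmonic : ((Qh Q h) ^ j * C ((Qh Q h) ^ j).leadingCoeff⁻¹).Monic :=
    monic_mul_leadingCoeff_inv hqjne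
  have hdiv := modByMonic_add_div (a * X ^ ℓ) ((Qh Q h) ^ j * C ((Qh Q h) ^ j).leadingCoeff⁻¹)
  refine ⟨(a * X ^ ℓ) %ₘ ((Qh Q h) ^ j * C ((Qh Q h) ^ j).leadingCoeff⁻¹),
    C ((Qh Q h) ^ j).leadingCoeff⁻¹ * S *
      ((a * X ^ ℓ) /ₘ ((Qh Q h) ^ j * C ((Qh Q h) ^ j).leadingCoeff⁻¹)) + b * X ^ ℓ, ?_, ?_⟩
  · have hQmdeg : ((Qh Q h) ^ j * C ((Qh Q h) ^ j).leadingCoeff⁻¹).natDegree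
        = j * Q.natDegree := by
      rw [natDegree_mul hqjne (by simpa using inv_ne_zero hlc), natDegree_C,
        add_zero, natDegree_pow, Qh_natDegree]
    rcases eq_or_ne ((a * X ^ ℓ) %ₘ ((Qh Q h) ^ j * C ((Qh Q h) ^ j).leadingCoeff⁻¹)) 0
      with h0 | h0
    · rw [h0, natDegree_zero]
      exact Nat.mul_pos hj hQ
    · have := natDegree_lt_natDegree h0 (degree_modByMonic_lt (a * X ^ ℓ) hmonic)
      rwa [hQmdeg] at this
  · linear_combination (-S) * hdiv + (-(X:K[X])^ℓ) * hab



lemma natDegree_comp_X_add_C (A : K[X]) (c : K) :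
    (A.comp (X + C c)).natDegree = A.natDegree := by
  rw [natDegree_comp, natDegree_X_add_C, mul_one]

lemma frac_mem_span (V : Submodule K (RatFunc K)) (D : RatFunc K) (n : ℕ)
    (hgen : ∀ ℓ, ℓ < n → algebraMap K[X] (RatFunc K) (X ^ ℓ) / D ∈ V)
    (A : K[X]) (hA : A.natDegree < n) :
    algebraMap K[X] (RatFunc K) A / D ∈ V := by
  have hrep : A = ∑ ℓ ∈ Finset.range n, C (A.coeff ℓ) * X ^ ℓ := by
    conv_lhs => rw [Polynomial.as_sum_range' A n hA]
    exact Finset.sum_congr rfl fun i _ => (C_mul_X_pow_eq_monomial).symm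
  rw [hrep, map_sum, Finset.sum_div]
  refine Submodule.sum_mem _ fun ℓ hℓ => ?_
  have : algebraMap K[X] (RatFunc K) (C (A.coeff ℓ) * X ^ ℓ) / D
      = (A.coeff ℓ) • (algebraMap K[X] (RatFunc K) (X ^ ℓ) / D) := by
    rw [map_mul, mul_div_assoc, Algebra.smul_def,
      IsScalarTower.algebraMap_apply K K[X] (RatFunc K), Polynomial.algebraMap_eq]
  rw [this]
  exact Submodule.smul_mem _ _ (hgen ℓ (Finset.mem_range.mp hℓ))

noncomputable def SpanS (Q : K[X]) (h : ℤ) : Submodule K (RatFunc K) :=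
  Submodule.span K { f : RatFunc K | ∃ (s ℓ : ℕ), 1 ≤ s ∧ ℓ < s * Q.natDegree ∧
    f = algebraMap (Polynomial K) (RatFunc K) (X ^ ℓ) /
        algebraMap (Polynomial K) (RatFunc K) ((Qh Q h) ^ s) }

noncomputable def PolyM (K : Type*) [Field K] : Submodule K (RatFunc K) :=
  LinearMap.range (IsScalarTower.toAlgHom K (Polynomial K) (RatFunc K)).toLinearMap

lemma mem_PolyM (A : K[X]) : algebraMap K[X] (RatFunc K) A ∈ PolyM K := ⟨A, rfl⟩

lemma polepart {Q : K[X]} (hQ : 0 < Q.natDegree) (h : ℤ) (N : ℕ) (A : K[X]) :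
    algebraMap K[X] (RatFunc K) A / algebraMap K[X] (RatFunc K) ((Qh Q h) ^ N)
      ∈ PolyM K ⊔ SpanS Q h := by
  induction N generalizing A with
  | zero =>
      simpa using Submodule.mem_sup_left (mem_PolyM A)
  | succ N ih =>
      set q := Qh Q h with hq
      have hqne : q ≠ 0 := Qh_ne_zero hQ h
      have hlc : q.leadingCoeff ≠ 0 := leadingCoeff_ne_zero.mpr hqne
      set Qm : K[X] := q * C q.leadingCoeff⁻¹ with hQm
      have hmonic : Qm.Monic := monic_mul_leadingCoeff_inv hqne
      obtain ⟨Rm, Dv, hdiv, hRm⟩ : ∃ Rm Dv, Rm + Qm * Dv = A ∧ Rm = A %ₘ Qm :=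
        ⟨A %ₘ Qm, A /ₘ Qm, modByMonic_add_div A Qm, rfl⟩
      have hQmdeg : Qm.natDegree = Q.natDegree := by
        rw [hQm, natDegree_mul hqne (by simpa using inv_ne_zero hlc),
          natDegree_C, add_zero, hq, Qh_natDegree]
      -- split
      have hιq : algebraMap K[X] (RatFunc K) q ≠ 0 := by
        simpa using (map_ne_zero_iff _ (IsFractionRing.injective K[X] (RatFunc K))).mpr hqne
      have hsplit : algebraMap K[X] (RatFunc K) A / algebraMap K[X] (RatFunc K) (q ^ (N+1))
          = algebraMap K[X] (RatFunc K) Rm / algebraMap K[X] (RatFunc K) (q ^ (N+1))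
            + algebraMap K[X] (RatFunc K) (C q.leadingCoeff⁻¹ * Dv)
              / algebraMap K[X] (RatFunc K) (q ^ N) := by
        have hN : algebraMap K[X] (RatFunc K) (q ^ N) ≠ 0 := by
          rw [map_pow]; exact pow_ne_zero _ hιq
        have hN1 : algebraMap K[X] (RatFunc K) (q ^ (N+1)) ≠ 0 := by
          rw [map_pow]; exact pow_ne_zero _ hιq
        have h2 : algebraMap K[X] (RatFunc K) (Qm * Dv) / algebraMap K[X] (RatFunc K) (q ^ (N+1))
            = algebraMap K[X] (RatFunc K) (C q.leadingCoeff⁻¹ * Dv)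
              / algebraMap K[X] (RatFunc K) (q ^ N) := by
          rw [div_eq_div_iff hN1 hN, ← map_mul, ← map_mul]
          congr 1
          rw [hQm]
          ring
        rw [← hdiv, map_add, add_div, h2]
      rw [hsplit]
      refine Submodule.add_mem _ ?_ (ih _)
      -- remainder part
      refine frac_mem_span _ _ ((N+1) * Q.natDegree) ?_ _ ?_
      · intro ℓ hℓ
        refine Submodule.mem_sup_right (Submodule.subset_span ?_)
        exact ⟨N+1, ℓ, Nat.succ_le_succ (Nat.zero_le _), hℓ, rfl⟩
      · rcases eq_or_ne Rm 0 with h0 | h0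
        · rw [h0, natDegree_zero]
          positivity
        · have hd : Rm.degree < Qm.degree := hRm ▸ degree_modByMonic_lt A hmonic
          have : Rm.natDegree < Qm.natDegree :=
            natDegree_lt_natDegree h0 hd
          calc Rm.natDegree < Q.natDegree := hQmdeg ▸ this
            _ ≤ (N+1) * Q.natDegree := Nat.le_mul_of_pos_left _ (Nat.succ_pos N)


noncomputable def Lmap (σ : RatFunc K ≃ₐ[K] RatFunc K) (r : ℕ) (p : ℕ → K[X]) :
    RatFunc K →ₗ[K] RatFunc K :=
  ∑ i ∈ Finset.range (r+1),
    (LinearMap.mul K (RatFunc K) (algebraMap K[X] (RatFunc K) (p i))) ∘ₗ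
      (σ ^ (-(i:ℤ)) : RatFunc K ≃ₐ[K] RatFunc K).toLinearMap

lemma Lmap_apply (σ : RatFunc K ≃ₐ[K] RatFunc K) (r : ℕ) (p : ℕ → K[X]) (T : RatFunc K) :
    Lmap σ r p T = ∑ i ∈ Finset.range (r+1),
      algebraMap K[X] (RatFunc K) (p i) * (σ ^ (-(i:ℤ))) T := by
  simp [Lmap, LinearMap.sum_apply, LinearMap.comp_apply, LinearMap.mul_apply']

noncomputable def Wspan (r : ℕ) (Q : K[X]) : Submodule K (RatFunc K) :=
  Submodule.span K { f : RatFunc K | ∃ (j s ℓ : ℕ),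
      j < r ∧ 1 ≤ s ∧ ℓ < s * Q.natDegree ∧
      f = algebraMap (Polynomial K) (RatFunc K) (X ^ ℓ) /
          algebraMap (Polynomial K) (RatFunc K) ((Q.comp (X - C (j : K))) ^ s) }

noncomputable def Mbig (σ : RatFunc K ≃ₐ[K] RatFunc K) (r : ℕ) (p : ℕ → K[X])
    (Q : K[X]) : Submodule K (RatFunc K) :=
  Wspan r Q ⊔ PolyM K ⊔ Submodule.map (Lmap σ r p) (KQspan K Q)

lemma reduction (σ : RatFunc K ≃ₐ[K] RatFunc K) (hσ : σ RatFunc.X = RatFunc.X + 1)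
    (r : ℕ) (p : ℕ → K[X]) {Q : K[X]} (hQdeg : 0 < Q.natDegree)
    (h : ℤ) (i0 : ℕ) (hi0 : i0 ≤ r) (ℓ0 : ℕ) (S : K[X])
    (hfac : p i0 = (Qh Q h) ^ ℓ0 * S) (hcop : IsCoprime S (Qh Q h))
    (hM : ∀ i : ℕ, i ≤ r → i ≠ i0 → SpanS Q (h + i0 - i) ≤ Mbig σ r p Q) :
    SpanS Q h ≤ Mbig σ r p Q := by
  rw [SpanS, Submodule.span_le]
  rintro f ⟨j, ℓ, hj, hℓ, rfl⟩
  obtain ⟨B, E, hBdeg, hkey⟩ := key_B hQdeg h j ℓ hj hcop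
  have hinj := IsFractionRing.injective K[X] (RatFunc K)
  have hιne : ∀ {A : K[X]}, A ≠ 0 → algebraMap K[X] (RatFunc K) A ≠ 0 := fun hA =>
    (map_ne_zero_iff _ hinj).mpr hA
  have hqne : ∀ k : ℤ, Qh Q k ≠ 0 := Qh_ne_zero hQdeg
  set T : RatFunc K := algebraMap K[X] (RatFunc K) (B.comp (X + C (i0:K))) /
      algebraMap K[X] (RatFunc K) ((Qh Q (h + i0)) ^ (j + ℓ0)) with hTdef
  have hTmem : T ∈ KQspan K Q := by
    refine frac_mem_span _ _ (j * Q.natDegree) ?_ _ ?_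
    · intro ℓ' hℓ'
      apply Submodule.subset_span
      refine ⟨h + i0, j + ℓ0, ℓ', le_add_right hj, ?_, rfl⟩
      exact lt_of_lt_of_le hℓ' (Nat.mul_le_mul_right _ (Nat.le_add_right j ℓ0))
    · rwa [natDegree_comp_X_add_C]
  have hσT : ∀ i : ℕ, (σ ^ (-(i:ℤ))) T
      = algebraMap K[X] (RatFunc K) (B.comp (X + C ((i0:K) + ((-(i:ℤ) : ℤ) : K)))) /
        algebraMap K[X] (RatFunc K) ((Qh Q (h + i0 + -(i:ℤ))) ^ (j + ℓ0)) := by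
    intro i
    rw [hTdef, map_div₀, sigma_zpow_algebraMap σ hσ, sigma_zpow_algebraMap σ hσ,
      pow_comp, comp_X_add_C_comp, Qh_comp]
  have hterm0 : algebraMap K[X] (RatFunc K) (p i0) * (σ ^ (-(i0:ℤ))) T
      = algebraMap K[X] (RatFunc K) (S * B) /
          algebraMap K[X] (RatFunc K) ((Qh Q h) ^ j) := by
    rw [hσT i0]
    have h1 : (i0:K) + ((-(i0:ℤ) : ℤ) : K) = 0 := by push_cast; ring
    have h2 : h + (i0:ℤ) + -(i0:ℤ) = h := by ring
    rw [h1, h2, C_0, add_zero, comp_X]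
    rw [hfac, mul_div_assoc', ← map_mul,
      div_eq_div_iff (hιne (pow_ne_zero _ (hqne h))) (hιne (pow_ne_zero _ (hqne h))),
      ← map_mul, ← map_mul]
    congr 1
    ring
  have hd : algebraMap K[X] (RatFunc K) ((Qh Q h) ^ j) ≠ 0 := hιne (pow_ne_zero _ (hqne h))
  have hEq : algebraMap K[X] (RatFunc K) E
        + algebraMap K[X] (RatFunc K) (S * B) / algebraMap K[X] (RatFunc K) ((Qh Q h) ^ j)
      = algebraMap K[X] (RatFunc K) (X ^ ℓ) / algebraMap K[X] (RatFunc K) ((Qh Q h) ^ j) := by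
    rw [eq_div_iff hd, add_mul, div_mul_cancel₀ _ hd, ← map_mul, ← map_add]
    refine congrArg _ ?_
    linear_combination -hkey
  have hi0mem : i0 ∈ Finset.range (r+1) := Finset.mem_range.mpr (Nat.lt_succ_of_le hi0)
  have hmain : algebraMap K[X] (RatFunc K) (X ^ ℓ) /
        algebraMap K[X] (RatFunc K) ((Qh Q h) ^ j)
      = algebraMap K[X] (RatFunc K) E + Lmap σ r p T
        - ∑ i ∈ (Finset.range (r+1)).erase i0,
            algebraMap K[X] (RatFunc K) (p i) * (σ ^ (-(i:ℤ))) T := by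
    rw [Lmap_apply, ← Finset.add_sum_erase _ _ hi0mem, hterm0, ← hEq]
    ring
  rw [hmain]
  refine Submodule.sub_mem _ (Submodule.add_mem _ ?_ ?_) ?_
  · exact Submodule.mem_sup_left (Submodule.mem_sup_right (mem_PolyM E))
  · exact Submodule.mem_sup_right ⟨T, hTmem, rfl⟩
  · refine Submodule.sum_mem _ fun i hi => ?_
    have hir : i ≤ r := Nat.lt_succ_iff.mp (Finset.mem_range.mp (Finset.mem_of_mem_erase hi))
    have hine : i ≠ i0 := Finset.ne_of_mem_erase hi
    rw [hσT i, mul_div_assoc', ← map_mul]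
    have hsh : h + (i0:ℤ) + -(i:ℤ) = h + i0 - i := by ring
    rw [hsh]
    have hpp := polepart hQdeg (h + i0 - i) (j + ℓ0)
      (p i * B.comp (X + C ((i0:K) + ((-(i:ℤ) : ℤ) : K))))
    refine (sup_le ?_ (hM i hir hine)) hpp
    exact le_trans le_sup_right le_sup_left

lemma base_le (r : ℕ) (Q : K[X]) (h : ℤ) (h1 : 1 - (r:ℤ) ≤ h) (h2 : h ≤ 0) :
    SpanS Q h ≤ Wspan r Q := by
  rw [SpanS, Submodule.span_le]
  rintro f ⟨s, ℓ, hs, hℓ, rfl⟩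
  apply Submodule.subset_span
  refine ⟨(-h).toNat, s, ℓ, by omega, hs, hℓ, ?_⟩
  have hc : (((-h).toNat : ℕ) : K) = -((h : ℤ) : K) := by
    have h3 : (((-h).toNat : ℕ) : ℤ) = -h := Int.toNat_of_nonneg (by omega)
    calc (((-h).toNat : ℕ) : K) = ((((-h).toNat : ℕ) : ℤ) : K) := by push_cast; ring
      _ = ((-h : ℤ) : K) := by rw [h3]
      _ = -((h : ℤ) : K) := by push_cast; ring
  have hQQ : Q.comp (X - C ((((-h).toNat : ℕ)) : K)) = Qh Q h := by
    rw [Qh, hc, map_neg, sub_neg_eq_add]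
  rw [hQQ]

lemma allS (σ : RatFunc K ≃ₐ[K] RatFunc K) (hσ : σ RatFunc.X = RatFunc.X + 1)
    (r : ℕ) (p : ℕ → K[X]) {Q : K[X]} (hQdeg : 0 < Q.natDegree)
    (href0 : ∀ h : ℤ, ∃ (ℓ : ℕ) (S : K[X]),
      p 0 = (Qh Q h) ^ ℓ * S ∧ IsCoprime S (Qh Q h))
    (hrefr : ∀ h : ℤ, ∃ (ℓ : ℕ) (S : K[X]),
      p r = (Qh Q h) ^ ℓ * S ∧ IsCoprime S (Qh Q h)) :
    ∀ n : ℕ, ∀ h : ℤ, h.toNat + (1 - (r:ℤ) - h).toNat ≤ n →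
      SpanS Q h ≤ Mbig σ r p Q := by
  intro n
  induction n with
  | zero =>
      intro h hh
      exact le_trans (base_le r Q h (by omega) (by omega))
        (le_trans le_sup_left le_sup_left)
  | succ n ih =>
      intro h hh
      rcases lt_or_ge (0:ℤ) h with hpos | hle
      · obtain ⟨ℓ0, S, hfac, hcop⟩ := href0 h
        refine reduction σ hσ r p hQdeg h 0 (Nat.zero_le r) ℓ0 S hfac hcop ?_
        intro i hir hine
        have hi1 : 1 ≤ i := Nat.one_le_iff_ne_zero.mpr hine
        exact ih (h + (0:ℕ) - i) (by push_cast; omega)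
      · rcases lt_or_ge h (1 - (r:ℤ)) with hneg | hbase
        · obtain ⟨ℓ0, S, hfac, hcop⟩ := hrefr h
          refine reduction σ hσ r p hQdeg h r le_rfl ℓ0 S hfac hcop ?_
          intro i hir hine
          exact ih (h + (r:ℕ) - i) (by push_cast; omega)
        · exact le_trans (base_le r Q h hbase hle)
            (le_trans le_sup_left le_sup_left)

end WRP

/-- Weak reduction of the polar part: if `Q` is squarefree, shift-free and refined with
respect to `p_0` and `p_r`, then every `u ∈ K_Q(X)` can be written `u = w + P + L*(T)`
with `T ∈ K_Q(X)`, `P ∈ K[X]`, and `w` in the span of the `X^ℓ / Q(X−j)^s` with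
`0 ≤ j ≤ r−1`, `s ≥ 1`, `ℓ < s·deg Q`. -/
theorem weak_reduction_of_poles (K : Type*) [Field K] [CharZero K]
    (σ : RatFunc K ≃ₐ[K] RatFunc K) (hσ : σ RatFunc.X = RatFunc.X + 1)
    (r : ℕ) (hr : 1 ≤ r) (p : ℕ → Polynomial K)
    (hp0 : p 0 ≠ 0) (hpr : p r ≠ 0)
    (Q : Polynomial K) (hQdeg : 0 < Q.natDegree) (hQsf : Squarefree Q)
    (hQshift : ∀ k : ℤ, k ≠ 0 → IsCoprime (Q.comp (X + C (k : K))) Q)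
    (href0 : RefinedWrt Q (p 0)) (hrefr : RefinedWrt Q (p r))
    (u : RatFunc K) (hu : u ∈ KQspan K Q) :
    ∃ w ∈ Submodule.span K { f : RatFunc K | ∃ (j s ℓ : ℕ),
        j < r ∧ 1 ≤ s ∧ ℓ < s * Q.natDegree ∧
        f = algebraMap (Polynomial K) (RatFunc K) (X ^ ℓ) /
            algebraMap (Polynomial K) (RatFunc K) ((Q.comp (X - C (j : K))) ^ s) },
      ∃ P : Polynomial K, ∃ T ∈ KQspan K Q,
        u = w + algebraMap (Polynomial K) (RatFunc K) P +
          ∑ i ∈ Finset.range (r + 1),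
            algebraMap (Polynomial K) (RatFunc K) (p i) * (σ ^ (-(i : ℤ))) T := by
  have hKQ : KQspan K Q ≤ WRP.Mbig σ r p Q := by
    rw [KQspan, Submodule.span_le]
    rintro f ⟨h, j, ℓ, hj, hℓ, rfl⟩
    exact WRP.allS σ hσ r p hQdeg href0 hrefr
      (h.toNat + (1 - (r:ℤ) - h).toNat) h le_rfl
      (Submodule.subset_span ⟨j, ℓ, hj, hℓ, rfl⟩)
  have hu' := hKQ hu
  rw [WRP.Mbig] at hu'
  rcases Submodule.mem_sup.mp hu' with ⟨x, hx, y, hy, rfl⟩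
  rcases Submodule.mem_sup.mp hx with ⟨w, hw, q, hq, rfl⟩
  rcases hq with ⟨P, hP⟩
  rcases hy with ⟨T, hT, hLT⟩
  refine ⟨w, hw, P, T, hT, ?_⟩
  have hq2 : q = algebraMap (Polynomial K) (RatFunc K) P := hP.symm
  have hy2 : y = ∑ i ∈ Finset.range (r + 1),
      algebraMap (Polynomial K) (RatFunc K) (p i) * (σ ^ (-(i : ℤ))) T := by
    rw [← hLT, WRP.Lmap_apply]
  rw [hq2, hy2]
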